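/- arXiv:2305.16215 — 5 statements merged into one kernel-verified Lean document; each statement's English description precedes it below -/
import Mathlib

section
/- Let X be a compact metric space, T > 0, λ ∈ ℂ, and k : X × X → ℝ a continuous symmetric positive semidefinite base kernel. Then the Koopman eigenfunction kernel k^λ is Hermitian positive semidefinite on continuous trajectories: for every N ∈ ℕ, continuous trajectories x^(1),…,x^(N) : [0,T] → X and complex coefficients c_1,…,c_N, the sum Σ_{i,j=1}^{N} conj(c_i) · c_j · k^λ(x^(i), x^(j)) is a nonnegative real number. -/
/-!
Writing `gᵢ(s) = cᵢ exp(-conj λ s)`, the quadratic form `∑ conj cᵢ cⱼ k^λ(xᵢ, xⱼ)` is the double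
integral over `[0,T]²` of `F(s,t) = ∑ conj gᵢ(s) gⱼ(t) k(xᵢ s, xⱼ t)`, and `F` is again a positive
semidefinite kernel on `ℝ`. Every left Riemann sum of `∫∫ F` is a value of the quadratic form of
`F` with equal weights, hence nonnegative; these sums converge to the integral by uniform
continuity of `F`, and the nonnegative cone of `ℂ` is closed.
-/

open MeasureTheory

/-- Continuous-time Koopman eigenfunction kernel
`k^λ(x,x') = ∫_0^T ∫_0^T exp(−λτ) k(x τ, x' τ') exp(−conj(λ) τ') dτ dτ'`. -/
noncomputable def klam {X : Type*} (T : ℝ) (lam : ℂ) (k : X → X → ℝ) (x x' : ℝ → X) : ℂ :=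
  ∫ τ in (0:ℝ)..T, ∫ τ' in (0:ℝ)..T,
    Complex.exp (-lam * (τ : ℂ)) * (k (x τ) (x' τ') : ℂ) *
      Complex.exp (-(starRingEnd ℂ) lam * (τ' : ℂ))

open Set Filter Topology Function ComplexConjugate ComplexOrder

section

variable {E : Type*} [NormedAddCommGroup E] [NormedSpace ℝ E]

noncomputable def leftRiemannSum (f : ℝ → E) (a b : ℝ) (n : ℕ) : E :=
  ∑ p ∈ Finset.range n, ((b - a) / n) • f (a + p * ((b - a) / n))

theorem leftRiemannSum_node_mem {a b : ℝ} (hab : a ≤ b) {n p : ℕ} (hp : p ≤ n) :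
    a + p * ((b - a) / n) ∈ Icc a b := by
  have hpn : (p : ℝ) / n ≤ 1 := div_le_one_of_le₀ (by exact_mod_cast hp) n.cast_nonneg
  have : p * ((b - a) / n) = (p / n) * (b - a) := by ring
  constructor <;> nlinarith [(by positivity : (0 : ℝ) ≤ p / n)]

theorem leftRiemannSum_sub (f g : ℝ → E) (a b : ℝ) (n : ℕ) :
    leftRiemannSum (fun s => f s - g s) a b n
      = leftRiemannSum f a b n - leftRiemannSum g a b n := by
  simp only [leftRiemannSum, smul_sub, Finset.sum_sub_distrib]

theorem norm_leftRiemannSum_le {f : ℝ → E} {a b C : ℝ} (hab : a ≤ b) (n : ℕ)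
    (hf : ∀ s ∈ Icc a b, ‖f s‖ ≤ C) : ‖leftRiemannSum f a b n‖ ≤ (b - a) * C := by
  have hh : 0 ≤ (b - a) / n := div_nonneg (sub_nonneg.2 hab) n.cast_nonneg
  calc ‖leftRiemannSum f a b n‖
      ≤ ∑ p ∈ Finset.range n, ‖((b - a) / n) • f (a + p * ((b - a) / n))‖ := norm_sum_le _ _
    _ ≤ ∑ p ∈ Finset.range n, (b - a) / n * C := Finset.sum_le_sum fun p hp => by
        rw [norm_smul, Real.norm_of_nonneg hh]
        exact mul_le_mul_of_nonneg_left
          (hf _ (leftRiemannSum_node_mem hab (Finset.mem_range.1 hp).le)) hh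
    _ ≤ (b - a) * C := by
        rcases Nat.eq_zero_or_pos n with rfl | hn
        · simpa using mul_nonneg (sub_nonneg.2 hab) ((norm_nonneg _).trans (hf a ⟨le_rfl, hab⟩))
        · rw [Finset.sum_const, Finset.card_range, nsmul_eq_mul]
          exact le_of_eq (by field_simp)

theorem norm_integral_sub_leftRiemannSum_le [CompleteSpace E] {f : ℝ → E} {a b δ ε : ℝ}
    {n : ℕ} (hab : a ≤ b) (hn : n ≠ 0) (hf : IntervalIntegrable f volume a b)
    (hmesh : (b - a) / n ≤ δ)
    (hosc : ∀ s ∈ Icc a b, ∀ s' ∈ Icc a b, |s - s'| ≤ δ → ‖f s - f s'‖ ≤ ε) :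
    ‖(∫ s in a..b, f s) - leftRiemannSum f a b n‖ ≤ (b - a) * ε := by
  set h := (b - a) / n
  set u : ℕ → ℝ := fun p => a + p * h
  have hh : 0 ≤ h := div_nonneg (sub_nonneg.2 hab) n.cast_nonneg
  have hu : ∀ p ≤ n, u p ∈ Icc a b := fun p hp => leftRiemannSum_node_mem hab hp
  have hstep : ∀ p, u (p + 1) - u p = h := fun p => by simp only [u]; push_cast; ring
  have hcell : ∀ p < n, IntervalIntegrable f volume (u p) (u (p + 1)) := fun p hp =>
    hf.mono_set (uIcc_subset_uIcc (Icc_subset_uIcc (hu p hp.le)) (Icc_subset_uIcc (hu (p + 1) hp)))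
  have hsplit : (∫ s in a..b, f s) - leftRiemannSum f a b n
      = ∑ p ∈ Finset.range n, ∫ s in u p..u (p + 1), (f s - f (u p)) := by
    have hu0 : u 0 = a := by simp [u]
    have hun : u n = b := by simp only [u, h]; field_simp; ring
    rw [← hu0, ← hun, ← intervalIntegral.sum_integral_adjacent_intervals hcell, hu0, hun,
      leftRiemannSum, ← Finset.sum_sub_distrib]
    refine Finset.sum_congr rfl fun p hp => ?_
    rw [intervalIntegral.integral_sub (hcell p (Finset.mem_range.1 hp)) intervalIntegrable_const,
      intervalIntegral.integral_const, hstep]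
  have hcell_le : ∀ p < n, ‖∫ s in u p..u (p + 1), (f s - f (u p))‖ ≤ ε * h := fun p hp => by
    have := intervalIntegral.norm_integral_le_of_norm_le_const (a := u p) (b := u (p + 1))
      (C := ε) (f := fun s => f s - f (u p)) fun s hs => by
        rw [uIoc_of_le (by linarith [hstep p])] at hs
        have hs' : s ∈ Icc a b := ⟨(hu p hp.le).1.trans hs.1.le, hs.2.trans (hu (p + 1) hp).2⟩
        refine hosc s hs' (u p) (hu p hp.le) ?_
        rw [abs_of_nonneg (by linarith [hs.1])]
        linarith [hs.2, hstep p]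
    rwa [hstep, abs_of_nonneg hh] at this
  calc ‖(∫ s in a..b, f s) - leftRiemannSum f a b n‖
      ≤ ∑ p ∈ Finset.range n, ε * h := by
        rw [hsplit]
        exact (norm_sum_le _ _).trans
          (Finset.sum_le_sum fun p hp => hcell_le p (Finset.mem_range.1 hp))
    _ = (b - a) * ε := by
        rw [Finset.sum_const, Finset.card_range, nsmul_eq_mul]
        simp only [h]
        field_simp

theorem norm_integral_integral_sub_leftRiemannSum_le [CompleteSpace E] {K : ℝ → ℝ → E}
    {a b δ ε : ℝ} {n : ℕ} (hab : a ≤ b) (hn : n ≠ 0) (hK : Continuous (uncurry K))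
    (hmesh : (b - a) / n ≤ δ)
    (hosc : ∀ s ∈ Icc a b, ∀ s' ∈ Icc a b, ∀ t ∈ Icc a b, ∀ t' ∈ Icc a b,
      |s - s'| ≤ δ → |t - t'| ≤ δ → ‖K s t - K s' t'‖ ≤ ε) :
    ‖(∫ s in a..b, ∫ t in a..b, K s t) - leftRiemannSum (fun s => leftRiemannSum (K s) a b n) a b n‖
      ≤ 2 * (b - a) ^ 2 * ε := by
  have hδ : |(0 : ℝ)| ≤ δ := by
    rw [abs_zero]; exact (div_nonneg (sub_nonneg.2 hab) n.cast_nonneg).trans hmesh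
  set I : ℝ → E := fun s => ∫ t in a..b, K s t
  set G : ℝ → E := fun s => leftRiemannSum (K s) a b n
  have hI : Continuous I :=
    intervalIntegral.continuous_parametric_intervalIntegral_of_continuous' hK a b
  have hG : Continuous G := by
    simp only [G, leftRiemannSum]
    fun_prop
  have hinner : ‖∫ s in a..b, (I s - G s)‖ ≤ (b - a) * ((b - a) * ε) := by
    have := intervalIntegral.norm_integral_le_of_norm_le_const fun s hs => by
      have hs : s ∈ Icc a b := Ioc_subset_Icc_self (uIoc_of_le hab ▸ hs)
      exact norm_integral_sub_leftRiemannSum_le hab hn ((hK.uncurry_left s).intervalIntegrable a b)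
        hmesh fun t ht t' ht' => hosc s hs s hs t ht t' ht' (by rwa [sub_self])
    rwa [abs_of_nonneg (sub_nonneg.2 hab), mul_comm] at this
  have houter : ‖(∫ s in a..b, G s) - leftRiemannSum G a b n‖ ≤ (b - a) * ((b - a) * ε) :=
    norm_integral_sub_leftRiemannSum_le hab hn (hG.intervalIntegrable a b) hmesh
      fun s hs s' hs' hss' => by
        rw [← leftRiemannSum_sub]
        exact norm_leftRiemannSum_le hab n fun t ht =>
          hosc s hs s' hs' t ht t ht hss' (by rwa [sub_self])
  calc ‖(∫ s in a..b, I s) - leftRiemannSum G a b n‖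
      = ‖(∫ s in a..b, (I s - G s)) + ((∫ s in a..b, G s) - leftRiemannSum G a b n)‖ := by
        rw [intervalIntegral.integral_sub (hI.intervalIntegrable a b) (hG.intervalIntegrable a b)]
        abel_nf
    _ ≤ (b - a) * ((b - a) * ε) + (b - a) * ((b - a) * ε) := norm_add_le_of_le hinner houter
    _ = 2 * (b - a) ^ 2 * ε := by ring

theorem tendsto_leftRiemannSum_leftRiemannSum [CompleteSpace E] {K : ℝ → ℝ → E} {a b : ℝ}
    (hab : a ≤ b) (hK : Continuous (uncurry K)) :
    Tendsto (fun n => leftRiemannSum (fun s => leftRiemannSum (K s) a b n) a b n) atTop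
      (𝓝 (∫ s in a..b, ∫ t in a..b, K s t)) := by
  rw [Metric.tendsto_nhds]
  intro ε hε
  set η := ε / (2 * (b - a) ^ 2 + 1)
  have hη : 0 < η := by positivity
  have hηε : 2 * (b - a) ^ 2 * η < ε := by
    have : (2 * (b - a) ^ 2 + 1) * η = ε := mul_div_cancel₀ _ (by positivity)
    linarith
  obtain ⟨δ, hδ, hunif⟩ := Metric.uniformContinuousOn_iff.1
    ((isCompact_Icc.prod isCompact_Icc).uniformContinuousOn_of_continuous hK.continuousOn) η hη
  have hosc : ∀ s ∈ Icc a b, ∀ s' ∈ Icc a b, ∀ t ∈ Icc a b, ∀ t' ∈ Icc a b,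
      |s - s'| ≤ δ / 2 → |t - t'| ≤ δ / 2 → ‖K s t - K s' t'‖ ≤ η := by
    intro s hs s' hs' t ht t' ht' hss' htt'
    rw [← dist_eq_norm]
    refine (hunif (s, t) ⟨hs, ht⟩ (s', t') ⟨hs', ht'⟩ ?_).le
    rw [Prod.dist_eq, Real.dist_eq, Real.dist_eq]
    exact max_lt (by linarith) (by linarith)
  filter_upwards [eventually_ne_atTop 0,
    (tendsto_const_div_atTop_nhds_zero_nat (b - a)).eventually (ge_mem_nhds (half_pos hδ))]
    with n hn hmesh
  rw [dist_comm, dist_eq_norm]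
  exact (norm_integral_integral_sub_leftRiemannSum_le hab hn hK hmesh hosc).trans_lt hηε

theorem integral_integral_finsetSum [CompleteSpace E] {ι : Type*} (s : Finset ι)
    {f : ι → ℝ → ℝ → E} (hf : ∀ i ∈ s, Continuous (uncurry (f i))) (a b : ℝ) :
    ∫ x in a..b, ∫ y in a..b, ∑ i ∈ s, f i x y = ∑ i ∈ s, ∫ x in a..b, ∫ y in a..b, f i x y := by
  rw [← intervalIntegral.integral_finsetSum fun i hi =>
    (intervalIntegral.continuous_parametric_intervalIntegral_of_continuous' (hf i hi) a b
      ).intervalIntegrable a b]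
  exact intervalIntegral.integral_congr fun x _ => intervalIntegral.integral_finsetSum
    fun i hi => ((hf i hi).uncurry_left x).intervalIntegrable a b

end

-- In `ComplexOrder`, `0 ≤ z` means that `z` is real and nonnegative.
def IsPosSemidefKernel {α : Type*} (K : α → α → ℂ) : Prop :=
  ∀ (M : ℕ) (a : Fin M → α) (c : Fin M → ℂ), 0 ≤ ∑ i, ∑ j, conj (c i) * c j * K (a i) (a j)

namespace IsPosSemidefKernel

variable {α β : Type*} {K : α → α → ℂ}

theorem sum_nonneg (hK : IsPosSemidefKernel K) {ι : Type*} [Fintype ι] (a : ι → α)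
    (c : ι → ℂ) : 0 ≤ ∑ i, ∑ j, conj (c i) * c j * K (a i) (a j) := by
  let e := (Fintype.equivFin ι).symm
  convert hK _ (a ∘ e) (c ∘ e) using 1
  rw [← e.sum_comp]
  exact Finset.sum_congr rfl fun i _ => (e.sum_comp _).symm

theorem sum_conj_mul_mul_comp (hK : IsPosSemidefKernel K) {ι : Type*} [Fintype ι]
    (y : ι → β → α) (g : ι → β → ℂ) :
    IsPosSemidefKernel fun s t => ∑ i, ∑ j, conj (g i s) * g j t * K (y i s) (y j t) := by
  intro M a c
  convert hK.sum_nonneg (fun q : Fin M × ι => y q.2 (a q.1))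
    (fun q : Fin M × ι => c q.1 * g q.2 (a q.1)) using 1
  simp only [Fintype.sum_prod_type, Finset.mul_sum, map_mul]
  refine Finset.sum_congr rfl fun p _ => ?_
  rw [Finset.sum_comm]
  refine Finset.sum_congr rfl fun i _ => Finset.sum_congr rfl fun q _ =>
    Finset.sum_congr rfl fun j _ => by ring

theorem leftRiemannSum_leftRiemannSum_nonneg {K : ℝ → ℝ → ℂ} (hK : IsPosSemidefKernel K)
    (a b : ℝ) (n : ℕ) : 0 ≤ leftRiemannSum (fun s => leftRiemannSum (K s) a b n) a b n := by
  convert hK n (fun p => a + p * ((b - a) / n)) (fun _ => ((b - a) / n : ℝ)) using 1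
  simp only [leftRiemannSum, Finset.sum_range, Finset.smul_sum, Complex.real_smul,
    Complex.conj_ofReal, mul_assoc]

theorem integral_integral_nonneg {K : ℝ → ℝ → ℂ} (hK : IsPosSemidefKernel K)
    (hKc : Continuous (uncurry K)) {a b : ℝ} (hab : a ≤ b) :
    0 ≤ ∫ s in a..b, ∫ t in a..b, K s t :=
  isClosed_Ici.mem_of_tendsto (tendsto_leftRiemannSum_leftRiemannSum hab hKc)
    (Eventually.of_forall fun n => hK.leftRiemannSum_leftRiemannSum_nonneg a b n)

end IsPosSemidefKernel

section KoopmanKernel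

variable {X : Type*}

theorem klam_congr {T : ℝ} (hT : 0 ≤ T) (lam : ℂ) (k : X → X → ℝ) {x x' y y' : ℝ → X}
    (hx : EqOn x y (Icc 0 T)) (hx' : EqOn x' y' (Icc 0 T)) :
    klam T lam k x x' = klam T lam k y y' := by
  refine intervalIntegral.integral_congr fun s hs => intervalIntegral.integral_congr fun t ht => ?_
  rw [uIcc_of_le hT] at hs ht
  simp only [hx hs, hx' ht]

theorem conj_mul_mul_klam (T : ℝ) (lam a b : ℂ) (k : X → X → ℝ) (x x' : ℝ → X) :
    conj a * b * klam T lam k x x' = ∫ s in 0..T, ∫ t in 0..T,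
      conj (a * Complex.exp (-conj lam * s)) * (b * Complex.exp (-conj lam * t)) *
        k (x s) (x' t) := by
  rw [klam, ← intervalIntegral.integral_const_mul]
  refine intervalIntegral.integral_congr fun s _ => ?_
  rw [← intervalIntegral.integral_const_mul]
  refine intervalIntegral.integral_congr fun t _ => ?_
  simp only [map_mul, ← Complex.exp_conj, map_neg, Complex.conj_conj, Complex.conj_ofReal]
  ring

end KoopmanKernel

theorem stmt_2_general {X : Type*} [MetricSpace X] (T : ℝ) (hT : 0 < T) (lam : ℂ)
    (k : X → X → ℝ) (hk : Continuous fun p : X × X => k p.1 p.2)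
    (hpsd : ∀ (M : ℕ) (a : Fin M → X) (c : Fin M → ℂ),
      (∑ i, ∑ j, (starRingEnd ℂ) (c i) * c j * (k (a i) (a j) : ℂ)).im = 0 ∧
      0 ≤ (∑ i, ∑ j, (starRingEnd ℂ) (c i) * c j * (k (a i) (a j) : ℂ)).re)
    (N : ℕ) (x : Fin N → ℝ → X) (hx : ∀ i, ContinuousOn (x i) (Set.Icc 0 T))
    (c : Fin N → ℂ) :
    (∑ i, ∑ j, (starRingEnd ℂ) (c i) * c j * klam T lam k (x i) (x j)).im = 0 ∧
    0 ≤ (∑ i, ∑ j, (starRingEnd ℂ) (c i) * c j * klam T lam k (x i) (x j)).re := by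
  let y : Fin N → ℝ → X := fun i => IccExtend hT.le ((Icc 0 T).domRestrict (x i))
  have hy : ∀ i, Continuous (y i) := fun i => (hx i).domRestrict.Icc_extend'
  have hxy : ∀ i, EqOn (x i) (y i) (Icc 0 T) := fun i s hs => by
    simp only [y, IccExtend_of_mem hT.le _ hs, domRestrict_apply]
  let g : Fin N → ℝ → ℂ := fun i s => c i * Complex.exp (-conj lam * s)
  let F : Fin N → Fin N → ℝ → ℝ → ℂ := fun i j s t => conj (g i s) * g j t * k (y i s) (y j t)
  have hFc : ∀ i j, Continuous (uncurry (F i j)) := fun i j => by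
    simp only [F, g]
    fun_prop
  have hFc' : ∀ i, Continuous (uncurry fun s t => ∑ j, F i j s t) := fun i =>
    continuous_finsetSum _ fun j _ => hFc i j
  have hkpsd : IsPosSemidefKernel fun a b => (k a b : ℂ) := fun M a c =>
    Complex.nonneg_iff.2 ⟨(hpsd M a c).2, (hpsd M a c).1.symm⟩
  have hsum : ∫ s in 0..T, ∫ t in 0..T, ∑ i, ∑ j, F i j s t
      = ∑ i, ∑ j, conj (c i) * c j * klam T lam k (x i) (x j) := by
    simp only [klam_congr hT.le lam k (hxy _) (hxy _), conj_mul_mul_klam,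
      integral_integral_finsetSum _ fun i _ => hFc' i,
      integral_integral_finsetSum _ fun j _ => hFc _ j]
    rfl
  have hnonneg := hsum ▸ (hkpsd.sum_conj_mul_mul_comp y g).integral_integral_nonneg
    (continuous_finsetSum _ fun i _ => hFc' i) hT.le
  exact ⟨(Complex.nonneg_iff.1 hnonneg).2.symm, (Complex.nonneg_iff.1 hnonneg).1⟩

/-- Theorem 1(i): the Koopman eigenfunction kernel is Hermitian positive semidefinite
on continuous trajectories. -/
theorem stmt_2 {X : Type*} [MetricSpace X] [CompactSpace X] (T : ℝ) (hT : 0 < T) (lam : ℂ)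
    (k : X → X → ℝ) (hk : Continuous fun p : X × X => k p.1 p.2)
    (hsymm : ∀ a b, k a b = k b a)
    (hpsd : ∀ (M : ℕ) (a : Fin M → X) (c : Fin M → ℂ),
      (∑ i, ∑ j, (starRingEnd ℂ) (c i) * c j * (k (a i) (a j) : ℂ)).im = 0 ∧
      0 ≤ (∑ i, ∑ j, (starRingEnd ℂ) (c i) * c j * (k (a i) (a j) : ℂ)).re)
    (N : ℕ) (x : Fin N → ℝ → X) (hx : ∀ i, ContinuousOn (x i) (Set.Icc 0 T))
    (c : Fin N → ℂ) :
    (∑ i, ∑ j, (starRingEnd ℂ) (c i) * c j * klam T lam k (x i) (x j)).im = 0 ∧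
    0 ≤ (∑ i, ∑ j, (starRingEnd ℂ) (c i) * c j * klam T lam k (x i) (x j)).re :=
  stmt_2_general T hT lam k hk hpsd N x hx c
end

section
/- Let X be a set, H ∈ ℕ, μ ∈ ℂ with μ ≠ 0, and k : X × X → ℝ a symmetric positive semidefinite base kernel. Then the matrix-valued Koopman eigenfunction kernel K^μ is positive semidefinite in the operator-valued sense: for every N ∈ ℕ, trajectories x^(1),…,x^(N) : {0,…,H} → X and vectors v^(1),…,v^(N) ∈ ℂ^{H+1}, the sum Σ_{i,j=1}^{N} (v^(i))^* · K^μ(x^(i), x^(j)) · v^(j) is a nonnegative real number. -/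
/-!
With `u = (μ ^ m)ₘ`, the matrix kernel is `K^μ(x, x') = k^μ(x, x') • u uᴴ`, so the quadratic form
`∑ i j, v_iᴴ K^μ(x_i, x_j) v_j` is the quadratic form `∑ i j, conj b_i b_j k^μ(x_i, x_j)` of the
scalar kernel with `b_j = uᴴ v_j`. In turn `k^μ` is a nonnegative multiple of
`∑ m n, conj w_m w_n k(x_m, x'_n)` with `w_n = conj μ ^ (-n)`, and the quadratic form of this kernel
at trajectories `x_i` is the quadratic form of `k` at the points `x_i(m)` with coefficients `b_i w_m`.
-/

/-- Scalar time-discrete Koopman eigenfunction kernel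
`k^μ(x,x') = (1/(H+1)²) Σ_{m,n} μ^(−m) k(x_m, x'_n) conj(μ)^(−n)`. -/
noncomputable def kmu {X : Type*} (H : ℕ) (μ : ℂ) (k : X → X → ℝ)
    (x x' : Fin (H + 1) → X) : ℂ :=
  (1 / ((H : ℂ) + 1) ^ 2) *
    ∑ m : Fin (H + 1), ∑ n : Fin (H + 1),
      μ ^ (-((m : ℕ) : ℤ)) * (k (x m) (x' n) : ℂ) * ((starRingEnd ℂ) μ) ^ (-((n : ℕ) : ℤ))

/-- Matrix-valued time-discrete Koopman eigenfunction kernel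
`K^μ(x,x')_{m,n} = μ^m conj(μ)^n k^μ(x,x')`. -/
noncomputable def Kmu {X : Type*} (H : ℕ) (μ : ℂ) (k : X → X → ℝ)
    (x x' : Fin (H + 1) → X) : Matrix (Fin (H + 1)) (Fin (H + 1)) ℂ :=
  fun m n => μ ^ (m : ℕ) * ((starRingEnd ℂ) μ) ^ (n : ℕ) * kmu H μ k x x'

open Matrix ComplexOrder

section

variable {X Y : Type*}

/-- `0 ≤ z` in `ℂ` (`ComplexOrder`) means that `z` is real and nonnegative. -/
def IsPSDKernel (K : Y → Y → ℂ) : Prop :=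
  ∀ (M : ℕ) (a : Fin M → Y) (c : Fin M → ℂ), 0 ≤ ∑ i, ∑ j, star (c i) * c j * K (a i) (a j)

namespace IsPSDKernel

variable {K : Y → Y → ℂ}

theorem sum_nonneg (hK : IsPSDKernel K) {ι : Type*} [Fintype ι] (a : ι → Y) (c : ι → ℂ) :
    0 ≤ ∑ i, ∑ j, star (c i) * c j * K (a i) (a j) := by
  let e := (Fintype.equivFin ι).symm
  calc 0 ≤ _ := hK _ (a ∘ e) (c ∘ e)
    _ = _ := Fintype.sum_equiv e _ _ fun _ => by exact Fintype.sum_equiv e _ _ fun _ => rfl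

theorem const_mul (hK : IsPSDKernel K) {r : ℂ} (hr : 0 ≤ r) :
    IsPSDKernel fun y y' => r * K y y' := by
  intro M a c
  have h := mul_nonneg hr (hK M a c)
  simp only [Finset.mul_sum] at h
  convert h using 3 with i _ j _
  ring

theorem weightedSum (hK : IsPSDKernel K) {τ : Type*} [Fintype τ] (w : τ → ℂ) :
    IsPSDKernel fun x x' : τ → Y => ∑ m, ∑ n, star (w m) * w n * K (x m) (x' n) := by
  intro M a c
  -- a quadratic form of `K` at the points `a i m`, with coefficients `c i * w m`
  have h := hK.sum_nonneg (fun p : Fin M × τ => a p.1 p.2) (fun p => c p.1 * w p.2)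
  simp only [Fintype.sum_prod_type, star_mul] at h
  convert h using 1
  simp only [Finset.mul_sum]
  refine Finset.sum_congr rfl fun i _ => ?_
  rw [Finset.sum_comm]
  refine Finset.sum_congr rfl fun j _ => Finset.sum_congr rfl fun m _ =>
    Finset.sum_congr rfl fun n _ => ?_
  ring

end IsPSDKernel

theorem star_dotProduct_smul_vecMulVec_mulVec {R n : Type*} [CommSemiring R] [StarRing R]
    [Fintype n] (c : R) (u v v' : n → R) :
    star v ⬝ᵥ ((c • vecMulVec u (star u)) *ᵥ v') = star (star u ⬝ᵥ v) * (star u ⬝ᵥ v') * c := by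
  rw [smul_mulVec, vecMulVec_mulVec, dotProduct_smul, dotProduct_smul, star_dotProduct v u]
  simp only [smul_eq_mul, MulOpposite.smul_eq_mul_unop, MulOpposite.unop_op]
  ring

theorem kmu_eq_mul_sum (H : ℕ) (μ : ℂ) (k : X → X → ℝ) (x x' : Fin (H + 1) → X) :
    kmu H μ k x x' = (1 / ((H : ℂ) + 1) ^ 2) *
      ∑ m : Fin (H + 1), ∑ n : Fin (H + 1),
        star (star μ ^ (-(m : ℤ))) * star μ ^ (-(n : ℤ)) * (k (x m) (x' n) : ℂ) := by
  simp [kmu, mul_right_comm _ (k _ _ : ℂ)]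

theorem Kmu_eq_smul_vecMulVec (H : ℕ) (μ : ℂ) (k : X → X → ℝ) (x x' : Fin (H + 1) → X) :
    Kmu H μ k x x' = kmu H μ k x x' •
      vecMulVec (fun m : Fin (H + 1) => μ ^ (m : ℕ)) (star fun m : Fin (H + 1) => μ ^ (m : ℕ)) := by
  ext m n
  simp only [Kmu, Matrix.smul_apply, vecMulVec_apply, Pi.star_apply, star_pow, RCLike.star_def,
    smul_eq_mul]
  ring

theorem isPSDKernel_kmu (H : ℕ) (μ : ℂ) {k : X → X → ℝ}
    (hk : IsPSDKernel fun a b => (k a b : ℂ)) :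
    IsPSDKernel (kmu H μ k) := by
  simp only [funext₂ (kmu_eq_mul_sum H μ k)]
  exact (hk.weightedSum _).const_mul (by positivity)

end

theorem stmt_4_general {X : Type*} (H : ℕ) (μ : ℂ) (k : X → X → ℝ)
    (hpsd : ∀ (M : ℕ) (a : Fin M → X) (c : Fin M → ℂ),
      (∑ i, ∑ j, (starRingEnd ℂ) (c i) * c j * (k (a i) (a j) : ℂ)).im = 0 ∧
      0 ≤ (∑ i, ∑ j, (starRingEnd ℂ) (c i) * c j * (k (a i) (a j) : ℂ)).re)
    (N : ℕ) (x : Fin N → Fin (H + 1) → X) (v : Fin N → Fin (H + 1) → ℂ) :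
    (∑ i, ∑ j, dotProduct (star (v i)) ((Kmu H μ k (x i) (x j)).mulVec (v j))).im = 0 ∧
    0 ≤ (∑ i, ∑ j, dotProduct (star (v i)) ((Kmu H μ k (x i) (x j)).mulVec (v j))).re := by
  have hk : IsPSDKernel fun a b => (k a b : ℂ) := fun M a c =>
    Complex.nonneg_iff.mpr ⟨(hpsd M a c).2, (hpsd M a c).1.symm⟩
  set u : Fin (H + 1) → ℂ := fun m => μ ^ (m : ℕ)
  have hS := (isPSDKernel_kmu H μ hk).sum_nonneg x fun i => star u ⬝ᵥ v i
  simp only [Kmu_eq_smul_vecMulVec, star_dotProduct_smul_vecMulVec_mulVec]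
  obtain ⟨hre, him⟩ := Complex.nonneg_iff.mp hS
  exact ⟨him.symm, hre⟩

/-- Corollary 1(i): the matrix-valued Koopman eigenfunction kernel is positive
semidefinite in the operator-valued sense. -/
theorem stmt_4 {X : Type*} (H : ℕ) (μ : ℂ) (hμ : μ ≠ 0) (k : X → X → ℝ)
    (hsymm : ∀ a b, k a b = k b a)
    (hpsd : ∀ (M : ℕ) (a : Fin M → X) (c : Fin M → ℂ),
      (∑ i, ∑ j, (starRingEnd ℂ) (c i) * c j * (k (a i) (a j) : ℂ)).im = 0 ∧
      0 ≤ (∑ i, ∑ j, (starRingEnd ℂ) (c i) * c j * (k (a i) (a j) : ℂ)).re)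
    (N : ℕ) (x : Fin N → Fin (H + 1) → X) (v : Fin N → Fin (H + 1) → ℂ) :
    (∑ i, ∑ j, dotProduct (star (v i)) ((Kmu H μ k (x i) (x j)).mulVec (v j))).im = 0 ∧
    0 ≤ (∑ i, ∑ j, dotProduct (star (v i)) ((Kmu H μ k (x i) (x j)).mulVec (v j))).re :=
  stmt_4_general H μ k hpsd N x v
end

section
/- Let X be a set, H ∈ ℕ, D ∈ ℕ, μ_1,…,μ_D ∈ ℂ nonzero complex numbers, and k^1,…,k^D : X × X → ℝ symmetric positive semidefinite base kernels. Define the matrix-valued Koopman kernel K(x,x') := Σ_{j=1}^{D} K^{μ_j}(x,x'), where K^{μ_j} is the matrix-valued Koopman eigenfunction kernel built from the eigenvalue μ_j and base kernel k^j. Then K is positive semidefinite in the operator-valued sense: for every N ∈ ℕ, trajectories x^(1),…,x^(N) : {0,…,H} → X and vectors v^(1),…,v^(N) ∈ ℂ^{H+1}, the sum Σ_{i,j=1}^{N} (v^(i))^* · K(x^(i), x^(j)) · v^(j) is a nonnegative real number. -/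
/-!
Each `Kmu H μ k x x'` is the rank-one matrix `kmu H μ k x x' • u uᴴ` with `u m = μ ^ m`,
so its quadratic form in vectors `v i` collapses to `conj (β i) * β j * kmu H μ k (x i) (x j)`
with `β i = uᴴ v i`. Expanding `kmu`, the whole form is `1 / (H + 1)²` times the Gram form of
the base kernel at the points `x i p`, indexed by pairs `(i, p)`, with coefficients
`β i * conj μ ^ (-p)`; hence it is a nonnegative real, and so is its sum over the eigenvalues.
-/

open ComplexOrder Finset Matrix

section
variable {X : Type*}

noncomputable def gramForm {ι : Type*} [Fintype ι] (k : X → X → ℝ) (a : ι → X) (c : ι → ℂ) :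
    ℂ :=
  ∑ s, ∑ s', starRingEnd ℂ (c s) * c s' * (k (a s) (a s') : ℂ)

lemma gramForm_comp_equiv {ι κ : Type*} [Fintype ι] [Fintype κ] (e : κ ≃ ι) (k : X → X → ℝ)
    (a : ι → X) (c : ι → ℂ) : gramForm k (a ∘ e) (c ∘ e) = gramForm k a c := by
  unfold gramForm
  exact Fintype.sum_equiv e _ _ fun _ => Fintype.sum_equiv e _ _ fun _ => rfl

lemma gramForm_nonneg {k : X → X → ℝ}
    (hk : ∀ (M : ℕ) (a : Fin M → X) (c : Fin M → ℂ), 0 ≤ gramForm k a c)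
    {ι : Type*} [Fintype ι] (a : ι → X) (c : ι → ℂ) : 0 ≤ gramForm k a c := by
  rw [← gramForm_comp_equiv (Fintype.equivFin ι).symm]
  exact hk _ _ _

lemma gramForm_prod {ι κ : Type*} [Fintype ι] [Fintype κ] (k : X → X → ℝ) (a : ι × κ → X)
    (c : ι × κ → ℂ) :
    gramForm k a c = ∑ i, ∑ j, ∑ p, ∑ q,
      starRingEnd ℂ (c (i, p)) * c (j, q) * (k (a (i, p)) (a (j, q)) : ℂ) := by
  simp only [gramForm, Fintype.sum_prod_type]
  exact sum_congr rfl fun i _ => sum_comm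

lemma dotProduct_Kmu_mulVec (H : ℕ) (μ : ℂ) (k : X → X → ℝ) (x x' : Fin (H + 1) → X)
    (v w : Fin (H + 1) → ℂ) :
    star v ⬝ᵥ (Kmu H μ k x x' *ᵥ w) =
      starRingEnd ℂ (∑ m : Fin (H + 1), starRingEnd ℂ μ ^ (m : ℕ) * v m) *
        (∑ n : Fin (H + 1), starRingEnd ℂ μ ^ (n : ℕ) * w n) * kmu H μ k x x' := by
  simp only [dotProduct, mulVec, Kmu, map_sum, map_mul, map_pow, Complex.conj_conj, sum_mul,
    mul_sum, Pi.star_apply, RCLike.star_def]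
  rw [sum_comm]
  exact sum_congr rfl fun m _ => sum_congr rfl fun n _ => by ring

lemma mul_kmu (H : ℕ) (μ : ℂ) (k : X → X → ℝ) (x x' : Fin (H + 1) → X) (b b' : ℂ) :
    starRingEnd ℂ b * b' * kmu H μ k x x' = (1 / ((H : ℂ) + 1) ^ 2) *
      ∑ p : Fin (H + 1), ∑ q : Fin (H + 1),
        starRingEnd ℂ (b * starRingEnd ℂ μ ^ (-((p : ℕ) : ℤ))) *
          (b' * starRingEnd ℂ μ ^ (-((q : ℕ) : ℤ))) * (k (x p) (x' q) : ℂ) := by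
  simp only [kmu, mul_sum, map_mul, map_zpow₀, Complex.conj_conj]
  exact sum_congr rfl fun p _ => sum_congr rfl fun q _ => by ring

lemma quadForm_Kmu_eq_gramForm {ι : Type*} [Fintype ι] (H : ℕ) (μ : ℂ) (k : X → X → ℝ)
    (x : ι → Fin (H + 1) → X) (v : ι → Fin (H + 1) → ℂ) :
    ∑ i, ∑ i', star (v i) ⬝ᵥ (Kmu H μ k (x i) (x i') *ᵥ v i') =
      (1 / ((H : ℂ) + 1) ^ 2) * gramForm k (fun s : ι × Fin (H + 1) => x s.1 s.2)
        (fun s => (∑ n : Fin (H + 1), starRingEnd ℂ μ ^ (n : ℕ) * v s.1 n) *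
          starRingEnd ℂ μ ^ (-((s.2 : ℕ) : ℤ))) := by
  rw [gramForm_prod]
  simp only [dotProduct_Kmu_mulVec, mul_kmu]
  simp only [mul_sum]

lemma quadForm_Kmu_nonneg {k : X → X → ℝ}
    (hk : ∀ (M : ℕ) (a : Fin M → X) (c : Fin M → ℂ), 0 ≤ gramForm k a c)
    {ι : Type*} [Fintype ι] (H : ℕ) (μ : ℂ) (x : ι → Fin (H + 1) → X)
    (v : ι → Fin (H + 1) → ℂ) :
    0 ≤ ∑ i, ∑ i', star (v i) ⬝ᵥ (Kmu H μ k (x i) (x i') *ᵥ v i') := by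
  rw [quadForm_Kmu_eq_gramForm]
  exact mul_nonneg (by positivity) (gramForm_nonneg hk _ _)

end

theorem stmt_5_general {X : Type*} (H D : ℕ) (μ : Fin D → ℂ)
    (k : Fin D → X → X → ℝ)
    (hpsd : ∀ (j : Fin D) (M : ℕ) (a : Fin M → X) (c : Fin M → ℂ),
      (∑ i, ∑ i', (starRingEnd ℂ) (c i) * c i' * (k j (a i) (a i') : ℂ)).im = 0 ∧
      0 ≤ (∑ i, ∑ i', (starRingEnd ℂ) (c i) * c i' * (k j (a i) (a i') : ℂ)).re)
    (K : (Fin (H + 1) → X) → (Fin (H + 1) → X) → Matrix (Fin (H + 1)) (Fin (H + 1)) ℂ)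
    (hK : ∀ x x', K x x' = ∑ j : Fin D, Kmu H (μ j) (k j) x x')
    (N : ℕ) (x : Fin N → Fin (H + 1) → X) (v : Fin N → Fin (H + 1) → ℂ) :
    (∑ i, ∑ j, dotProduct (star (v i)) ((K (x i) (x j)).mulVec (v j))).im = 0 ∧
    0 ≤ (∑ i, ∑ j, dotProduct (star (v i)) ((K (x i) (x j)).mulVec (v j))).re := by
  have hgram : ∀ j M (a : Fin M → X) c, 0 ≤ gramForm (k j) a c := fun j M a c =>
    Complex.nonneg_iff.2 ⟨(hpsd j M a c).2, (hpsd j M a c).1.symm⟩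
  have hsplit : ∑ i, ∑ i', star (v i) ⬝ᵥ (K (x i) (x i') *ᵥ v i') =
      ∑ j, ∑ i, ∑ i', star (v i) ⬝ᵥ (Kmu H (μ j) (k j) (x i) (x i') *ᵥ v i') := by
    simp only [hK, sum_mulVec, dotProduct_sum]
    exact (sum_congr rfl fun _ _ => sum_comm).trans sum_comm
  have hnonneg : 0 ≤ ∑ i, ∑ i', star (v i) ⬝ᵥ (K (x i) (x i') *ᵥ v i') := by
    rw [hsplit]
    exact sum_nonneg fun j _ => quadForm_Kmu_nonneg (hgram j) H (μ j) x v
  rw [Complex.nonneg_iff] at hnonneg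
  exact ⟨hnonneg.2.symm, hnonneg.1⟩

/-- Proposition 1(i)/Corollary 1 (time-discrete form): the Koopman kernel, the sum of
the eigenfunction kernels over a finite family of eigenvalues, is positive semidefinite
in the operator-valued sense. -/
theorem stmt_5 {X : Type*} (H D : ℕ) (μ : Fin D → ℂ) (hμ : ∀ j, μ j ≠ 0)
    (k : Fin D → X → X → ℝ)
    (hsymm : ∀ j a b, k j a b = k j b a)
    (hpsd : ∀ (j : Fin D) (M : ℕ) (a : Fin M → X) (c : Fin M → ℂ),
      (∑ i, ∑ i', (starRingEnd ℂ) (c i) * c i' * (k j (a i) (a i') : ℂ)).im = 0 ∧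
      0 ≤ (∑ i, ∑ i', (starRingEnd ℂ) (c i) * c i' * (k j (a i) (a i') : ℂ)).re)
    (K : (Fin (H + 1) → X) → (Fin (H + 1) → X) → Matrix (Fin (H + 1)) (Fin (H + 1)) ℂ)
    (hK : ∀ x x', K x x' = ∑ j : Fin D, Kmu H (μ j) (k j) x x')
    (N : ℕ) (x : Fin N → Fin (H + 1) → X) (v : Fin N → Fin (H + 1) → ℂ) :
    (∑ i, ∑ j, dotProduct (star (v i)) ((K (x i) (x j)).mulVec (v j))).im = 0 ∧
    0 ≤ (∑ i, ∑ j, dotProduct (star (v i)) ((K (x i) (x j)).mulVec (v j))).re :=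
  stmt_5_general H D μ k hpsd K hK N x v
end

section
/- Let X be a set, H ∈ ℕ, μ ∈ ℂ with μ ≠ 0, and k : X × X → ℝ a base kernel. For any N ∈ ℕ, reference trajectories x^(1),…,x^(N) : {0,…,H} → X and arbitrary coefficient vectors β^(1),…,β^(N) ∈ ℂ^{H+1}, define for a trajectory x : {0,…,H} → X the vector z(x) := Σ_{i=1}^{N} K^μ(x, x^(i)) · β^(i) ∈ ℂ^{H+1}. Then z(x)_{m+1} = μ · z(x)_m for every 0 ≤ m < H, hence z(x)_m = μ^m · z(x)_0 for every 0 ≤ m ≤ H; that is, every function in the span of the kernel sections of K^μ satisfies the Koopman-invariance (linear time-invariant) constraint exactly, regardless of the choice of coefficients. -/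
/-- Theorem 1(iii)/Corollary 1: every function in the span of the kernel sections of
`K^μ` satisfies the Koopman-invariance (LTI) constraint exactly, independently of the
coefficients. -/
theorem stmt_6 {X : Type*} (H : ℕ) (μ : ℂ) (hμ : μ ≠ 0) (k : X → X → ℝ)
    (N : ℕ) (xs : Fin N → Fin (H + 1) → X) (β : Fin N → Fin (H + 1) → ℂ)
    (x : Fin (H + 1) → X) (z : Fin (H + 1) → ℂ)
    (hz : ∀ m, z m = ∑ i, (Kmu H μ k x (xs i)).mulVec (β i) m) :
    (∀ (m : ℕ) (h : m < H), z ⟨m + 1, by omega⟩ = μ * z ⟨m, by omega⟩) ∧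
    (∀ (m : ℕ) (h : m ≤ H), z ⟨m, by omega⟩ = μ ^ m * z ⟨0, by omega⟩) := by
  set c : ℂ := ∑ i, ∑ n : Fin (H + 1),
      ((starRingEnd ℂ) μ) ^ (n : ℕ) * kmu H μ k x (xs i) * β i n with hc
  have key : ∀ m : Fin (H + 1), z m = μ ^ (m : ℕ) * c := by
    intro m
    rw [hz m, hc, Finset.mul_sum]
    refine Finset.sum_congr rfl fun i _ => ?_
    rw [Matrix.mulVec, Finset.mul_sum]
    refine Finset.sum_congr rfl fun n _ => ?_
    simp [Kmu, dotProduct]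
    ring
  constructor
  · intro m h
    rw [key, key]
    simp only [pow_succ]
    ring
  · intro m h
    rw [key, key]
    simp
end

section
/- Let X be a set, H ∈ ℕ, μ ∈ ℂ with μ ≠ 0, and k : X × X → ℝ a symmetric base kernel (k(a,b) = k(b,a) for all a, b). Then for any trajectories x, x' : {0,…,H} → X, the matrix-valued Koopman eigenfunction kernel is Hermitian in the kernel sense: the conjugate transpose of K^μ(x, x') equals K^μ(x', x). -/
lemma kmu_conj {X : Type*} (H : ℕ) (μ : ℂ) (k : X → X → ℝ)
    (hsymm : ∀ a b, k a b = k b a) (x x' : Fin (H + 1) → X) :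
    (starRingEnd ℂ) (kmu H μ k x x') = kmu H μ k x' x := by
  unfold kmu
  rw [map_mul, map_sum]
  have h1 : (starRingEnd ℂ) (1 / ((H : ℂ) + 1) ^ 2) = 1 / ((H : ℂ) + 1) ^ 2 := by
    simp
  rw [h1, Finset.sum_comm]
  congr 1
  apply Finset.sum_congr rfl
  intro n _
  rw [map_sum]
  apply Finset.sum_congr rfl
  intro m _
  simp only [map_mul, map_zpow₀, Complex.conj_conj, Complex.conj_ofReal,
    RingHom.id_apply]
  rw [hsymm]
  ring

/-- Hermitian symmetry of the matrix-valued Koopman eigenfunction kernel: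
`K^μ(x, x')ᴴ = K^μ(x', x)` for a symmetric base kernel. -/
theorem stmt_15 {X : Type*} (H : ℕ) (μ : ℂ) (hμ : μ ≠ 0) (k : X → X → ℝ)
    (hsymm : ∀ a b, k a b = k b a) (x x' : Fin (H + 1) → X) :
    (Kmu H μ k x x').conjTranspose = Kmu H μ k x' x := by
  ext m n
  simp only [Matrix.conjTranspose_apply, Kmu, ← starRingEnd_apply, map_mul, map_pow, Complex.conj_conj]
  rw [kmu_conj H μ k hsymm]
  ring
end
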